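/- arXiv:2304.04091 — 2 statements merged into one kernel-verified Lean document; each statement's English description precedes it below -/
import Mathlib

section
/- Let μ ∈ S satisfy C(μ) = ∅ (so k*(μ) = 0). Then for every w ∈ Σ_{K×L}, inf_{λ ∈ Alt(μ)} Σ_{k∈[K]} Σ_{l∈[L]} w_{k,l}(μ_{k,l} − λ_{k,l})² = min_{k∈[K]} Σ_{l∈[M], μ_{k,l}<0} w_{k,l} μ_{k,l}². -/
/-!
A model `λ ∈ Alt(μ)` has a best arm `k`, whose first `M` means are all positive; moving each
negative `μ_{k,l}` (`l < M`) to a positive value costs at least `w_{k,l} μ_{k,l}²`. Conversely,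
replacing the first `M` entries of row `k` by `max μ_{k,l} ε` makes `k` the only feasible arm
(every other arm keeps its violated constraint), and the cost of this move tends to the
violation cost of row `k` as `ε → 0⁺`.
-/

open Finset Set

noncomputable section

/-- Arm `k` is feasible under model `μ`: all the first `M` subpopulation means are nonnegative. -/
def feasible (M : ℕ) {K L : ℕ} (μ : Fin K → Fin L → ℝ) (k : Fin K) : Prop :=
  ∀ l : Fin L, (l : ℕ) < M → 0 ≤ μ k l

/-- Quality of arm `k`: the `q`-weighted average of its subpopulation means. -/
def quality {K L : ℕ} (q : Fin L → ℝ) (μ : Fin K → Fin L → ℝ) (k : Fin K) : ℝ :=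
  ∑ l, q l * μ k l

/-- `isBestArm M q μ a` : `a` is the answer `k*(μ)` making `μ` a member of the class `S`.
`a = some k` means `k` is the unique best feasible arm with all constraints strictly
satisfied; `a = none` (i.e. `k*(μ) = 0`) means every arm strictly violates a constraint. -/
def isBestArm (M : ℕ) {K L : ℕ} (q : Fin L → ℝ) (μ : Fin K → Fin L → ℝ) :
    Option (Fin K) → Prop
  | some k => (∀ l : Fin L, (l : ℕ) < M → 0 < μ k l) ∧
      (∀ j : Fin K, j ≠ k → feasible M μ j → quality q μ j < quality q μ k)
  | none => ∀ k : Fin K, ∃ l : Fin L, (l : ℕ) < M ∧ μ k l < 0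

/-- The class `S` of well-separated bandit models. -/
def inS (M : ℕ) {K L : ℕ} (q : Fin L → ℝ) (μ : Fin K → Fin L → ℝ) : Prop :=
  ∃ a, isBestArm M q μ a

/-- The simplex `Σ_{K×L}` of sampling weights. -/
def simplex (K L : ℕ) : Set (Fin K → Fin L → ℝ) :=
  {w | (∀ k l, 0 ≤ w k l) ∧ ∑ k, ∑ l, w k l = 1}

/-- The weighted squared distance `Σ_k Σ_l w_{k,l} (μ_{k,l} - λ_{k,l})²`. -/
def wDist {K L : ℕ} (w μ lam : Fin K → Fin L → ℝ) : ℝ :=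
  ∑ k, ∑ l, w k l * (μ k l - lam k l) ^ 2

/-- `Alt M q μ a` : the set of models in `S` whose answer differs from `a = k*(μ)`. -/
def Alt (M : ℕ) {K L : ℕ} (q : Fin L → ℝ) (a : Option (Fin K)) :
    Set (Fin K → Fin L → ℝ) :=
  {lam | ∃ b, isBestArm M q lam b ∧ b ≠ a}

/-- `f^opt_μ(w)` for best arm `ks = k*(μ)`. -/
def fopt (M : ℕ) {K L : ℕ} (q : Fin L → ℝ) (μ : Fin K → Fin L → ℝ) (ks : Fin K)
    (w : Fin K → Fin L → ℝ) : ℝ :=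
  ⨅ k : {k : Fin K // k ≠ ks},
    sInf {v : ℝ | ∃ lam : Fin K → Fin L → ℝ,
      quality q lam ks ≤ quality q lam k.1 ∧
      (∀ l : Fin L, (l : ℕ) < M → 0 ≤ lam k.1 l) ∧
      v = (∑ l, w ks l * (μ ks l - lam ks l) ^ 2)
            + ∑ l, w k.1 l * (μ k.1 l - lam k.1 l) ^ 2}

/-- `f^fea_μ(w)` for best arm `ks = k*(μ)`. -/
def ffea (M : ℕ) {K L : ℕ} (μ : Fin K → Fin L → ℝ) (ks : Fin K)
    (w : Fin K → Fin L → ℝ) : ℝ :=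
  ⨅ l : {l : Fin L // (l : ℕ) < M}, w ks l.1 * (μ ks l.1) ^ 2

/-- `min_{k∈[K]} Σ_{l∈[M], μ_{k,l}<0} w_{k,l} μ_{k,l}²`. -/
def gInfeas (M : ℕ) {K L : ℕ} (μ : Fin K → Fin L → ℝ) (w : Fin K → Fin L → ℝ) : ℝ :=
  ⨅ k : Fin K, ∑ l ∈ univ.filter (fun l : Fin L => (l : ℕ) < M ∧ μ k l < 0),
    w k l * (μ k l) ^ 2

open Filter Topology

section Row

variable {L : ℕ}

def violationCost (M : ℕ) (w μ : Fin L → ℝ) : ℝ :=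
  ∑ l ∈ univ.filter (fun l : Fin L => (l : ℕ) < M ∧ μ l < 0), w l * μ l ^ 2

def raiseConstraints (M : ℕ) (ε : ℝ) (μ : Fin L → ℝ) (l : Fin L) : ℝ :=
  if (l : ℕ) < M then max (μ l) ε else μ l

lemma violationCost_le_of_pos {M : ℕ} {w μ lam : Fin L → ℝ} (hw : ∀ l, 0 ≤ w l)
    (hlam : ∀ l : Fin L, (l : ℕ) < M → 0 < lam l) :
    violationCost M w μ ≤ ∑ l, w l * (μ l - lam l) ^ 2 :=
  calc violationCost M w μ
      ≤ ∑ l ∈ univ.filter (fun l : Fin L => (l : ℕ) < M ∧ μ l < 0),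
          w l * (μ l - lam l) ^ 2 := by
        refine sum_le_sum fun l hl => ?_
        obtain ⟨hlM, hneg⟩ := (mem_filter.1 hl).2
        have hpos := hlam l hlM
        exact mul_le_mul_of_nonneg_left (by nlinarith) (hw l)
    _ ≤ ∑ l, w l * (μ l - lam l) ^ 2 :=
        sum_le_sum_of_subset_of_nonneg (filter_subset _ _)
          fun l _ _ => mul_nonneg (hw l) (sq_nonneg _)

lemma tendsto_sum_sq_sub_raiseConstraints (M : ℕ) (w μ : Fin L → ℝ) :
    Tendsto (fun ε => ∑ l, w l * (μ l - raiseConstraints M ε μ l) ^ 2) (𝓝 0)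
      (𝓝 (violationCost M w μ)) := by
  have hcont : Continuous fun ε => ∑ l, w l * (μ l - raiseConstraints M ε μ l) ^ 2 := by
    refine continuous_finsetSum _ fun l _ => ?_
    unfold raiseConstraints
    split_ifs <;> fun_prop
  convert hcont.tendsto 0 using 2
  rw [violationCost, sum_filter]
  refine sum_congr rfl fun l _ => ?_
  unfold raiseConstraints
  by_cases hlM : (l : ℕ) < M
  · by_cases hneg : μ l < 0
    · simp [hlM, hneg, max_eq_right hneg.le]
    · simp [hlM, hneg, max_eq_left (not_lt.1 hneg)]
  · simp [hlM]

end Row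

section Model

variable {K L M : ℕ}

lemma gInfeas_eq_iInf_violationCost (μ w : Fin K → Fin L → ℝ) :
    gInfeas M μ w = ⨅ k, violationCost M (w k) (μ k) :=
  rfl

lemma sum_row_le_wDist {w : Fin K → Fin L → ℝ} (hw : ∀ k l, 0 ≤ w k l)
    (μ lam : Fin K → Fin L → ℝ) (k : Fin K) :
    ∑ l, w k l * (μ k l - lam k l) ^ 2 ≤ wDist w μ lam :=
  single_le_sum (f := fun j => ∑ l, w j l * (μ j l - lam j l) ^ 2)
    (fun j _ => sum_nonneg fun l _ => mul_nonneg (hw j l) (sq_nonneg _)) (mem_univ k)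

lemma wDist_update (w μ : Fin K → Fin L → ℝ) (k : Fin K) (r : Fin L → ℝ) :
    wDist w μ (Function.update μ k r) = ∑ l, w k l * (μ k l - r l) ^ 2 := by
  unfold wDist
  rw [sum_eq_single k (fun j _ hj => by simp [hj]) (by simp)]
  simp

lemma exists_pos_row_of_mem_Alt_none {q : Fin L → ℝ} {lam : Fin K → Fin L → ℝ}
    (h : lam ∈ Alt M q (none : Option (Fin K))) :
    ∃ k, ∀ l : Fin L, (l : ℕ) < M → 0 < lam k l := by
  obtain ⟨_ | k, hb, hne⟩ := h
  · exact absurd rfl hne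
  · exact ⟨k, hb.1⟩

lemma gInfeas_le_wDist_of_mem_Alt_none {q : Fin L → ℝ} {w μ lam : Fin K → Fin L → ℝ}
    (hw : ∀ k l, 0 ≤ w k l) (h : lam ∈ Alt M q (none : Option (Fin K))) :
    gInfeas M μ w ≤ wDist w μ lam := by
  obtain ⟨k, hk⟩ := exists_pos_row_of_mem_Alt_none h
  calc gInfeas M μ w ≤ violationCost M (w k) (μ k) := by
        rw [gInfeas_eq_iInf_violationCost]
        exact ciInf_le (Finite.bddBelow (finite_range _)) k
    _ ≤ ∑ l, w k l * (μ k l - lam k l) ^ 2 := violationCost_le_of_pos (hw k) hk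
    _ ≤ wDist w μ lam := sum_row_le_wDist hw μ lam k

lemma update_raiseConstraints_mem_Alt_none {q : Fin L → ℝ} {μ : Fin K → Fin L → ℝ}
    (hμ : isBestArm M q μ none) {ε : ℝ} (hε : 0 < ε) (k : Fin K) :
    Function.update μ k (raiseConstraints M ε (μ k)) ∈ Alt M q (none : Option (Fin K)) := by
  refine ⟨some k, ⟨fun l hl => ?_, fun j hj hfeas => ?_⟩, Option.some_ne_none k⟩
  · simpa [raiseConstraints, hl] using Or.inr hε
  · obtain ⟨l, hlM, hneg⟩ := hμ j
    have := hfeas l hlM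
    rw [Function.update_of_ne hj] at this
    exact absurd this (not_le.2 hneg)

lemma sInf_wDist_Alt_none_le_violationCost {q : Fin L → ℝ} {w μ : Fin K → Fin L → ℝ}
    (hμ : isBestArm M q μ none) (hw : ∀ k l, 0 ≤ w k l) (k : Fin K) :
    sInf (wDist w μ '' Alt M q (none : Option (Fin K))) ≤ violationCost M (w k) (μ k) := by
  have hbdd : BddBelow (wDist w μ '' Alt M q (none : Option (Fin K))) :=
    ⟨gInfeas M μ w, forall_mem_image.2 fun _ h => gInfeas_le_wDist_of_mem_Alt_none hw h⟩
  refine ge_of_tendsto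
    ((tendsto_sum_sq_sub_raiseConstraints M (w k) (μ k)).mono_left
      (nhdsWithin_le_nhds (s := Ioi 0))) ?_
  filter_upwards [self_mem_nhdsWithin] with ε hε
  rw [← wDist_update]
  exact csInf_le hbdd (mem_image_of_mem _ (update_raiseConstraints_mem_Alt_none hμ hε k))

end Model

theorem inf_alt_eq_of_noFeasible_general {K L M : ℕ} (hK : 2 ≤ K)
    (q : Fin L → ℝ) (μ : Fin K → Fin L → ℝ)
    (hμ : isBestArm M q μ (none : Option (Fin K))) :
    ∀ w ∈ simplex K L,
      sInf (wDist w μ '' Alt M q (none : Option (Fin K))) = gInfeas M μ w := by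
  rintro w ⟨hw, -⟩
  have k₀ : Fin K := ⟨0, by omega⟩
  have hne : (wDist w μ '' Alt M q (none : Option (Fin K))).Nonempty :=
    ⟨_, mem_image_of_mem _ (update_raiseConstraints_mem_Alt_none hμ one_pos k₀)⟩
  refine le_antisymm ?_
    (le_csInf hne fun _ ⟨_, h, hv⟩ => hv ▸ gInfeas_le_wDist_of_mem_Alt_none hw h)
  have : Nonempty (Fin K) := ⟨k₀⟩
  rw [gInfeas_eq_iInf_violationCost]
  exact le_ciInf (sInf_wDist_Alt_none_le_violationCost hμ hw)

/-- Case `k*(μ)=0` of the inner infimum computation: for every `w ∈ Σ_{K×L}`,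
`inf_{λ ∈ Alt(μ)} Σ_{k,l} w_{k,l}(μ_{k,l}-λ_{k,l})² = min_k Σ_{l∈[M],μ_{k,l}<0} w_{k,l}μ_{k,l}²`. -/
theorem inf_alt_eq_of_noFeasible {K L M : ℕ} (hK : 2 ≤ K) (hM : 1 ≤ M) (hML : M ≤ L)
    (q : Fin L → ℝ) (μ : Fin K → Fin L → ℝ)
    (hμ : isBestArm M q μ (none : Option (Fin K))) :
    ∀ w ∈ simplex K L,
      sInf (wDist w μ '' Alt M q (none : Option (Fin K))) = gInfeas M μ w :=
  inf_alt_eq_of_noFeasible_general hK q μ hμ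

end
end

section
/- Let μ ∈ S satisfy C(μ) = ∅ (so k*(μ) = 0), and let w ∈ Σ_{K×L}. For i ∈ [K], define l(i) ∈ argmax{μ_{i,l}² : l ∈ [M], μ_{i,l} < 0}, and let λ^{(i)} ∈ ℝ^{K×L} agree with μ except that λ^{(i)}_{i,l} = 0 for every l ∈ [M] with μ_{i,l} < 0. Then for every ε > 0 and every i ∈ [K], there exists λ ∈ Alt(μ) with Σ_{k∈[K]} Σ_{l∈[L]} w_{k,l}(μ_{k,l} − λ_{k,l})² < Σ_{l∈[M], μ_{i,l}<0} w_{i,l} μ_{i,l}² + ε; consequently inf_{λ ∈ Alt(μ)} Σ_{k,l} w_{k,l}(μ_{k,l} − λ_{k,l})² ≤ min_{k∈[K]} Σ_{l∈[M], μ_{k,l}<0} w_{k,l} μ_{k,l}². -/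
/-!
Every arm of `μ` violates some constraint. Raising the violated constraint means of a single
arm `i` to a small `δ > 0` makes `i` the only feasible arm, hence the best arm of the new model,
which therefore lies in `Alt(μ)`. As `δ → 0` its distance to `μ` tends to the cost
`Σ_{l∈[M], μ_{i,l}<0} w_{i,l} μ_{i,l}²` of zeroing out those means.
-/

open Finset Set

noncomputable section

/-- `raiseArm M i 0 μ` is the model `λ^{(i)}`. -/
def raiseArm (M : ℕ) {K L : ℕ} (i : Fin K) (δ : ℝ) (μ : Fin K → Fin L → ℝ) :
    Fin K → Fin L → ℝ :=
  fun k l => if k = i ∧ (l : ℕ) < M then max (μ k l) δ else μ k l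

section raiseArm

variable {K L M : ℕ} {q : Fin L → ℝ} {μ : Fin K → Fin L → ℝ} {i : Fin K} {δ : ℝ}

theorem isBestArm_raiseArm (hμ : isBestArm M q μ none) (hδ : 0 < δ) :
    isBestArm M q (raiseArm M i δ μ) (some i) := by
  refine ⟨fun l hl => ?_, fun j hj hfeas => ?_⟩
  · simpa [raiseArm, hl] using Or.inr hδ
  · exfalso
    obtain ⟨l, hl, hneg⟩ := hμ j
    have hfl := hfeas l hl
    simp only [raiseArm, hj, false_and, if_false] at hfl
    linarith

theorem raiseArm_mem_Alt (hμ : isBestArm M q μ none) (hδ : 0 < δ) :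
    raiseArm M i δ μ ∈ Alt M q (none : Option (Fin K)) :=
  ⟨some i, isBestArm_raiseArm hμ hδ, Option.some_ne_none i⟩

theorem continuous_raiseArm : Continuous fun δ => raiseArm M i δ μ := by
  refine continuous_pi fun k => continuous_pi fun l => ?_
  unfold raiseArm
  split_ifs <;> fun_prop

theorem wDist_raiseArm_zero (w : Fin K → Fin L → ℝ) :
    wDist w μ (raiseArm M i 0 μ) =
      ∑ l ∈ univ.filter (fun l : Fin L => (l : ℕ) < M ∧ μ i l < 0), w i l * (μ i l) ^ 2 := by
  rw [wDist, Finset.sum_eq_single i, Finset.sum_filter]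
  · refine Finset.sum_congr rfl fun l _ => ?_
    by_cases hl : (l : ℕ) < M
    · rcases lt_or_ge (μ i l) 0 with hneg | hnn
      · simp [raiseArm, hl, hneg, max_eq_right hneg.le]
      · simp [raiseArm, hl, hnn.not_gt, max_eq_left hnn]
    · simp [raiseArm, hl]
  · intro k _ hk
    exact Finset.sum_eq_zero fun l _ => by simp [raiseArm, hk]
  · simp

end raiseArm

theorem continuous_wDist {K L : ℕ} (w μ : Fin K → Fin L → ℝ) : Continuous (wDist w μ) := by
  unfold wDist
  fun_prop

theorem wDist_nonneg {K L : ℕ} {w : Fin K → Fin L → ℝ} (hw : ∀ k l, 0 ≤ w k l)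
    (μ lam : Fin K → Fin L → ℝ) : 0 ≤ wDist w μ lam :=
  Finset.sum_nonneg fun k _ => Finset.sum_nonneg fun l _ => mul_nonneg (hw k l) (sq_nonneg _)

theorem exists_mem_Alt_wDist_lt {K L M : ℕ} (q : Fin L → ℝ) {μ : Fin K → Fin L → ℝ}
    (hμ : isBestArm M q μ none) (w : Fin K → Fin L → ℝ) {ε : ℝ} (hε : 0 < ε) (i : Fin K) :
    ∃ lam ∈ Alt M q (none : Option (Fin K)),
      wDist w μ lam < (∑ l ∈ univ.filter (fun l : Fin L => (l : ℕ) < M ∧ μ i l < 0),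
        w i l * (μ i l) ^ 2) + ε := by
  have hcont := (continuous_wDist w μ).comp (continuous_raiseArm (M := M) (i := i) (μ := μ))
  have hnear : ∀ᶠ δ in nhdsWithin (0 : ℝ) (Ioi 0), wDist w μ (raiseArm M i δ μ) <
      (∑ l ∈ univ.filter (fun l : Fin L => (l : ℕ) < M ∧ μ i l < 0), w i l * (μ i l) ^ 2) + ε := by
    refine ((hcont.tendsto 0).mono_left nhdsWithin_le_nhds).eventually_lt_const ?_
    simpa [wDist_raiseArm_zero] using hε
  obtain ⟨δ, hδlt, hδpos⟩ := (hnear.and self_mem_nhdsWithin).exists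
  exact ⟨raiseArm M i δ μ, raiseArm_mem_Alt hμ hδpos, hδlt⟩

theorem inf_alt_le_gInfeas_general {K L M : ℕ} (hK : 2 ≤ K)
    (q : Fin L → ℝ) (μ : Fin K → Fin L → ℝ)
    (hμ : isBestArm M q μ (none : Option (Fin K)))
    (w : Fin K → Fin L → ℝ) (hw : w ∈ simplex K L) :
    (∀ ε > (0 : ℝ), ∀ i : Fin K,
        ∃ lam ∈ Alt M q (none : Option (Fin K)),
          wDist w μ lam
            < (∑ l ∈ Finset.univ.filter (fun l : Fin L => (l : ℕ) < M ∧ μ i l < 0),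
                w i l * (μ i l) ^ 2) + ε) ∧
      sInf (wDist w μ '' Alt M q (none : Option (Fin K))) ≤ gInfeas M μ w := by
  have approx := fun ε (hε : ε > (0 : ℝ)) => exists_mem_Alt_wDist_lt q hμ w hε
  refine ⟨approx, ?_⟩
  have : Nonempty (Fin K) := ⟨⟨0, by omega⟩⟩
  have hbdd : BddBelow (wDist w μ '' Alt M q (none : Option (Fin K))) :=
    ⟨0, by rintro _ ⟨lam, -, rfl⟩; exact wDist_nonneg hw.1 μ lam⟩
  refine le_ciInf fun k => le_of_forall_pos_le_add fun ε hε => ?_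
  obtain ⟨lam, hlam, hlt⟩ := approx ε hε k
  exact (csInf_le hbdd ⟨lam, hlam, rfl⟩).trans hlt.le

/-- Case `k*(μ) = 0`, upper bound direction: for each arm `i`, zeroing out the violated
constraint means of arm `i` yields alternatives arbitrarily close in objective value, so
the infimum over `Alt(μ)` is at most `min_k Σ_{l∈[M], μ_{k,l}<0} w_{k,l} μ_{k,l}²`. -/
theorem inf_alt_le_gInfeas {K L M : ℕ} (hK : 2 ≤ K) (hM : 1 ≤ M) (hML : M ≤ L)
    (q : Fin L → ℝ) (μ : Fin K → Fin L → ℝ)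
    (hμ : isBestArm M q μ (none : Option (Fin K)))
    (w : Fin K → Fin L → ℝ) (hw : w ∈ simplex K L)
    (lk : Fin K → Fin L)
    (hlk : ∀ i, (lk i : ℕ) < M ∧ μ i (lk i) < 0 ∧
      ∀ l : Fin L, (l : ℕ) < M → μ i l < 0 → (μ i l) ^ 2 ≤ (μ i (lk i)) ^ 2)
    (lamI : Fin K → (Fin K → Fin L → ℝ))
    (hlamI : ∀ i : Fin K, ∀ k : Fin K, ∀ l : Fin L,
      lamI i k l = if k = i ∧ (l : ℕ) < M ∧ μ k l < 0 then 0 else μ k l) :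
    (∀ ε > (0 : ℝ), ∀ i : Fin K,
        ∃ lam ∈ Alt M q (none : Option (Fin K)),
          wDist w μ lam
            < (∑ l ∈ Finset.univ.filter (fun l : Fin L => (l : ℕ) < M ∧ μ i l < 0),
                w i l * (μ i l) ^ 2) + ε) ∧
      sInf (wDist w μ '' Alt M q (none : Option (Fin K))) ≤ gInfeas M μ w :=
  inf_alt_le_gInfeas_general hK q μ hμ w hw
end
end
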